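/- Compactness with countable models for STT: if every finite subset of a branch A is satisfiable, then A has a countable model (a model in which every domain D(σ) is countable). -/

import Mathlib

/-- Simple types of STT: the type `o` of truth values is `base 0`, sorts are `base (α+1)`. -/
inductive Ty : Type
  | base : ℕ → Ty
  | arr : Ty → Ty → Ty
  deriving DecidableEq

abbrev Ty.o : Ty := Ty.base 0
abbrev Ty.sort (α : ℕ) : Ty := Ty.base (α + 1)

/-- Terms of STT: variables, negation, primitive equality at every type, application,
lambda abstraction. -/
inductive Tm : Ty → Type
  | var : ℕ → (σ : Ty) → Tm σ
  | neg : Tm (Ty.arr Ty.o Ty.o)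
  | eq : (σ : Ty) → Tm (Ty.arr σ (Ty.arr σ Ty.o))
  | app : ∀ {σ τ : Ty}, Tm (Ty.arr σ τ) → Tm σ → Tm τ
  | lam : ℕ → (σ : Ty) → ∀ {τ : Ty}, Tm τ → Tm (Ty.arr σ τ)

def Tm.Not (s : Tm Ty.o) : Tm Ty.o := Tm.app Tm.neg s
def Tm.Eqn {σ : Ty} (s t : Tm σ) : Tm Ty.o := Tm.app (Tm.app (Tm.eq σ) s) t
def Tm.Diseq {σ : Ty} (s t : Tm σ) : Tm Ty.o := Tm.Not (Tm.Eqn s t)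

/-- Argument lists (spines): `Args σ ρ` turns a head of type `σ` into a term of type `ρ`. -/
inductive Args : Ty → Ty → Type
  | nil : ∀ {ρ}, Args ρ ρ
  | cons : ∀ {σ τ ρ}, Tm σ → Args τ ρ → Args (Ty.arr σ τ) ρ

def applyArgs : ∀ {σ ρ : Ty}, Tm σ → Args σ ρ → Tm ρ
  | _, _, s, Args.nil => s
  | _, _, s, Args.cons t a => applyArgs (Tm.app s t) a

def nfArgs (f : (σ : Ty) → Tm σ → Tm σ) : ∀ {σ ρ : Ty}, Args σ ρ → Args σ ρ
  | _, _, Args.nil => Args.nil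
  | _, _, Args.cons t a => Args.cons (f _ t) (nfArgs f a)

/-- Pairs of equi-typed argument lists `s₁ … sₙ` and `t₁ … tₙ`. -/
inductive Args2 : Ty → Ty → Type
  | nil : ∀ {ρ}, Args2 ρ ρ
  | cons : ∀ {σ τ ρ}, Tm σ → Tm σ → Args2 τ ρ → Args2 (Ty.arr σ τ) ρ

def Args2.left : ∀ {σ ρ}, Args2 σ ρ → Args σ ρ
  | _, _, Args2.nil => Args.nil
  | _, _, Args2.cons s _ p => Args.cons s (Args2.left p)

def Args2.right : ∀ {σ ρ}, Args2 σ ρ → Args σ ρ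
  | _, _, Args2.nil => Args.nil
  | _, _, Args2.cons _ t p => Args.cons t (Args2.right p)

/-- The list of disequations `sᵢ ≠ tᵢ` of a pair of argument lists. -/
def Args2.diseqs : ∀ {σ ρ}, Args2 σ ρ → List (Tm Ty.o)
  | _, _, Args2.nil => []
  | _, _, Args2.cons s t p => Tm.Diseq s t :: Args2.diseqs p

/-- Atomic heads: names (variables and the logical constants). -/
inductive Atomic : ∀ {σ : Ty}, Tm σ → Prop
  | var : ∀ n σ, Atomic (Tm.var n σ)
  | neg : Atomic Tm.neg
  | eq : ∀ σ, Atomic (Tm.eq σ)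

/-- Update a substitution at the name `(x, σ0)`. -/
def updS (θ : ℕ → (σ : Ty) → Option (Tm σ)) (x : ℕ) (σ0 : Ty) (t : Tm σ0) :
    ℕ → (σ : Ty) → Option (Tm σ) := fun n σ =>
  if h : n = x ∧ σ = σ0 then some (h.2.symm ▸ t) else θ n σ

/-- A normalization operator with an accompanying substitution operation,
satisfying N1–N3 and S1–S4. -/
structure NormOp : Type where
  nf : ∀ {σ : Ty}, Tm σ → Tm σ
  sub : (ℕ → (σ : Ty) → Option (Tm σ)) → ∀ {σ : Ty}, Tm σ → Tm σ
  n1 : ∀ {σ : Ty} (s : Tm σ), nf (nf s) = nf s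
  n2 : ∀ {σ τ : Ty} (s : Tm (Ty.arr σ τ)) (t : Tm σ), nf (Tm.app (nf s) t) = nf (Tm.app s t)
  n3 : ∀ {σ : Ty} {β : ℕ} (h : Tm σ), Atomic h → ∀ a : Args σ (Ty.base β),
      nf (applyArgs h a) = applyArgs h (nfArgs (fun _ s => nf s) a)
  s1 : ∀ θ (n : ℕ) (σ : Ty), sub θ (Tm.var n σ) = (θ n σ).getD (Tm.var n σ)
  s1neg : ∀ θ, sub θ Tm.neg = Tm.neg
  s1eq : ∀ θ (σ : Ty), sub θ (Tm.eq σ) = Tm.eq σ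
  s2 : ∀ θ {σ τ : Ty} (s : Tm (Ty.arr σ τ)) (t : Tm σ),
      sub θ (Tm.app s t) = Tm.app (sub θ s) (sub θ t)
  s3 : ∀ θ (x : ℕ) (σ : Ty) {τ : Ty} (s : Tm τ) (t : Tm σ),
      nf (Tm.app (sub θ (Tm.lam x σ s)) t) = nf (sub (updS θ x σ t) s)
  s4 : ∀ {σ : Ty} (s : Tm σ), nf (sub (fun _ _ => none) s) = nf s

/-- The evidence conditions for a branch `E`. -/
structure Evident (Ω : NormOp) (E : Set (Tm Ty.o)) : Prop where
  dn : ∀ s : Tm Ty.o, Tm.Not (Tm.Not s) ∈ E → s ∈ E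
  bq : ∀ s t : Tm Ty.o, Tm.Eqn s t ∈ E → (s ∈ E ∧ t ∈ E) ∨ (Tm.Not s ∈ E ∧ Tm.Not t ∈ E)
  be : ∀ s t : Tm Ty.o, Tm.Diseq s t ∈ E → (s ∈ E ∧ Tm.Not t ∈ E) ∨ (Tm.Not s ∈ E ∧ t ∈ E)
  fq : ∀ {σ τ : Ty} (s t : Tm (Ty.arr σ τ)), Tm.Eqn s t ∈ E → ∀ u : Tm σ, Ω.nf u = u →
      Tm.Eqn (Ω.nf (Tm.app s u)) (Ω.nf (Tm.app t u)) ∈ E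
  fe : ∀ {σ τ : Ty} (s t : Tm (Ty.arr σ τ)), Tm.Diseq s t ∈ E →
      ∃ x : ℕ, Tm.Diseq (Ω.nf (Tm.app s (Tm.var x σ))) (Ω.nf (Tm.app t (Tm.var x σ))) ∈ E
  mat : ∀ {σ : Ty} (x : ℕ) (p : Args2 σ Ty.o),
      applyArgs (Tm.var x σ) p.left ∈ E → Tm.Not (applyArgs (Tm.var x σ) p.right) ∈ E →
      ∃ d ∈ p.diseqs, d ∈ E
  dec : ∀ {σ : Ty} {α : ℕ} (x : ℕ) (p : Args2 σ (Ty.sort α)),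
      Tm.Diseq (applyArgs (Tm.var x σ) p.left) (applyArgs (Tm.var x σ) p.right) ∈ E →
      ∃ d ∈ p.diseqs, d ∈ E
  con : ∀ {α : ℕ} (s t u v : Tm (Ty.sort α)), Tm.Eqn s t ∈ E → Tm.Diseq u v ∈ E →
      (Tm.Diseq s u ∈ E ∧ Tm.Diseq t u ∈ E) ∨ (Tm.Diseq s v ∈ E ∧ Tm.Diseq t v ∈ E)

/-- A term `u` is discriminating in `E` if it occurs on one side of a disequation in `E`. -/
def Discriminating (E : Set (Tm Ty.o)) {σ : Ty} (u : Tm σ) : Prop :=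
  ∃ t : Tm σ, Tm.Diseq u t ∈ E ∨ Tm.Diseq t u ∈ E

/-- An `α`-discriminant: a maximal set of `α`-discriminating terms no two of which are
related by a disequation in `E`. -/
def IsDiscriminant (E : Set (Tm Ty.o)) (α : ℕ) (a : Set (Tm (Ty.sort α))) : Prop :=
  (∀ u ∈ a, Discriminating E u) ∧
  (∀ s ∈ a, ∀ t ∈ a, Tm.Diseq s t ∉ E) ∧
  (∀ b : Set (Tm (Ty.sort α)), a ⊆ b → (∀ u ∈ b, Discriminating E u) →
    (∀ s ∈ b, ∀ t ∈ b, Tm.Diseq s t ∉ E) → b = a)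

/-- `s # t`: the disequation `s ≠ t` or `t ≠ s` belongs to `E`. -/
def hashE (E : Set (Tm Ty.o)) {σ : Ty} (s t : Tm σ) : Prop :=
  Tm.Diseq s t ∈ E ∨ Tm.Diseq t s ∈ E

/-- Compatibility of two terms relative to an evident branch, by induction on types. -/
def compat (Ω : NormOp) (E : Set (Tm Ty.o)) : (σ : Ty) → Tm σ → Tm σ → Prop
  | Ty.base 0 => fun s t =>
      ¬(Ω.nf s ∈ E ∧ Tm.Not (Ω.nf t) ∈ E) ∧ ¬(Tm.Not (Ω.nf s) ∈ E ∧ Ω.nf t ∈ E)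
  | Ty.base (α + 1) => fun s t => ¬ hashE E (Ω.nf s) (Ω.nf t)
  | Ty.arr σ τ => fun s t => ∀ u v : Tm σ, compat Ω E σ u v →
      compat Ω E τ (Tm.app s u) (Tm.app t v)

/-- `ExistsPairHashNf Ω E p` holds if `[sᵢ] # [tᵢ]` for some position `i` of `p`. -/
def ExistsPairHashNf (Ω : NormOp) (E : Set (Tm Ty.o)) : ∀ {σ ρ : Ty}, Args2 σ ρ → Prop
  | _, _, Args2.nil => False
  | _, _, Args2.cons s t p => hashE E (Ω.nf s) (Ω.nf t) ∨ ExistsPairHashNf Ω E p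

/-- The value system of an evident branch `E`: at `o` the values are booleans, at a sort the
values are `α`-discriminants, and at function types the logical-relation clause is used. -/
def sem (Ω : NormOp) (E : Set (Tm Ty.o)) : (σ : Ty) → (A : Type) × (Tm σ → A → Prop)
  | Ty.base 0 => ⟨Bool, fun s b => if b then Tm.Not (Ω.nf s) ∉ E else Ω.nf s ∉ E⟩
  | Ty.base (α + 1) => ⟨Set (Tm (Ty.sort α)), fun s a =>
      IsDiscriminant E α a ∧ (Discriminating E (Ω.nf s) → Ω.nf s ∈ a)⟩
  | Ty.arr σ τ =>
      ⟨{x : (sem Ω E σ).1 // ∃ t : Tm σ, (sem Ω E σ).2 t x} → (sem Ω E τ).1,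
       fun s f => ∀ (t : Tm σ) (x : (sem Ω E σ).1) (h : (sem Ω E σ).2 t x),
         (sem Ω E τ).2 (Tm.app s t) (f ⟨x, t, h⟩)⟩

/-- An applicative structure for STT: nonempty domains, `D(στ)` a set of functions
`D(σ) → D(τ)` (extensionality), `D(o) = {0,1}`, together with an assignment for the
variables and logical values for `¬` and `=_σ`. -/
structure Struc : Type 1 where
  D : Ty → Type
  ap : ∀ {σ τ : Ty}, D (Ty.arr σ τ) → D σ → D τ
  ext : ∀ {σ τ : Ty} (f g : D (Ty.arr σ τ)), (∀ a : D σ, ap f a = ap g a) → f = g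
  ne : ∀ σ : Ty, Nonempty (D σ)
  I : ℕ → ∀ σ : Ty, D σ
  bo : D Ty.o ≃ Bool
  negv : D (Ty.arr Ty.o Ty.o)
  eqv : ∀ σ : Ty, D (Ty.arr σ (Ty.arr σ Ty.o))
  hneg : ∀ b : D Ty.o, ap negv b = bo.symm (!(bo b))
  heq : ∀ {σ : Ty} (a b : D σ), ap (ap (eqv σ) a) b = bo.symm true ↔ a = b

/-- Update the assignment of a structure at the name `(m, σ0)`. -/
def updD (M : Struc) (I : ℕ → ∀ σ, M.D σ) (m : ℕ) (σ0 : Ty) (a : M.D σ0) :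
    ℕ → ∀ σ, M.D σ := fun n σ =>
  if h : n = m ∧ σ = σ0 then (h.2.symm ▸ a) else I n σ

/-- The evaluation relation of a logical structure. -/
inductive Eval (M : Struc) : (ℕ → ∀ σ, M.D σ) → ∀ σ : Ty, Tm σ → M.D σ → Prop
  | var : ∀ (I : ℕ → ∀ σ, M.D σ) (n : ℕ) (σ : Ty), Eval M I σ (Tm.var n σ) (I n σ)
  | neg : ∀ I : ℕ → ∀ σ, M.D σ, Eval M I (Ty.arr Ty.o Ty.o) Tm.neg M.negv
  | eq : ∀ (I : ℕ → ∀ σ, M.D σ) (σ : Ty), Eval M I (Ty.arr σ (Ty.arr σ Ty.o)) (Tm.eq σ) (M.eqv σ)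
  | app : ∀ {I : ℕ → ∀ σ, M.D σ} {σ τ : Ty} {s : Tm (Ty.arr σ τ)} {t : Tm σ}
      {f : M.D (Ty.arr σ τ)} {a : M.D σ},
      Eval M I (Ty.arr σ τ) s f → Eval M I σ t a → Eval M I τ (Tm.app s t) (M.ap f a)
  | lam : ∀ {I : ℕ → ∀ σ, M.D σ} (n : ℕ) (σ : Ty) {τ : Ty} (s : Tm τ) (f : M.D (Ty.arr σ τ)),
      (∀ a : M.D σ, Eval M (updD M I n σ a) τ s (M.ap f a)) →
      Eval M I (Ty.arr σ τ) (Tm.lam n σ s) f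

/-- A logical interpretation: a logical structure whose evaluation is total. -/
structure Interp : Type 1 extends Struc where
  total : ∀ (σ : Ty) (s : Tm σ), ∃ a : toStruc.D σ, Eval toStruc toStruc.I σ s a

/-- `M` is a model of the set of formulas `E`. -/
def Satisfies (M : Interp) (E : Set (Tm Ty.o)) : Prop :=
  ∀ s ∈ E, Eval M.toStruc M.I Ty.o s (M.bo.symm true)

/-- A surjective interpretation: every value is denoted by some term. -/
def Surj (M : Interp) : Prop :=
  ∀ (σ : Ty) (a : M.D σ), ∃ s : Tm σ, Eval M.toStruc M.I σ s a

/-- A complete branch: contains `s` or `¬s` for every normal formula `s`. -/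
def CompleteBranch (Ω : NormOp) (E : Set (Tm Ty.o)) : Prop :=
  ∀ s : Tm Ty.o, Ω.nf s = s → s ∈ E ∨ Tm.Not s ∈ E

/-- The abstract consistency conditions on a set of branches `Γ`. -/
structure ACC (Ω : NormOp) (Γ : Set (Set (Tm Ty.o))) : Prop where
  dn : ∀ A ∈ Γ, ∀ s : Tm Ty.o, Tm.Not (Tm.Not s) ∈ A → insert s A ∈ Γ
  bq : ∀ A ∈ Γ, ∀ s t : Tm Ty.o, Tm.Eqn s t ∈ A →
      insert s (insert t A) ∈ Γ ∨ insert (Tm.Not s) (insert (Tm.Not t) A) ∈ Γ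
  be : ∀ A ∈ Γ, ∀ s t : Tm Ty.o, Tm.Diseq s t ∈ A →
      insert s (insert (Tm.Not t) A) ∈ Γ ∨ insert (Tm.Not s) (insert t A) ∈ Γ
  fq : ∀ A ∈ Γ, ∀ {σ τ : Ty} (s t : Tm (Ty.arr σ τ)), Tm.Eqn s t ∈ A → ∀ u : Tm σ, Ω.nf u = u →
      insert (Tm.Eqn (Ω.nf (Tm.app s u)) (Ω.nf (Tm.app t u))) A ∈ Γ
  fe : ∀ A ∈ Γ, ∀ {σ τ : Ty} (s t : Tm (Ty.arr σ τ)), Tm.Diseq s t ∈ A →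
      ∃ x : ℕ, insert (Tm.Diseq (Ω.nf (Tm.app s (Tm.var x σ))) (Ω.nf (Tm.app t (Tm.var x σ)))) A ∈ Γ
  mat : ∀ A ∈ Γ, ∀ {σ : Ty} (x : ℕ) (p : Args2 σ Ty.o),
      applyArgs (Tm.var x σ) p.left ∈ A → Tm.Not (applyArgs (Tm.var x σ) p.right) ∈ A →
      ∃ d ∈ p.diseqs, insert d A ∈ Γ
  dec : ∀ A ∈ Γ, ∀ {σ : Ty} {α : ℕ} (x : ℕ) (p : Args2 σ (Ty.sort α)),
      Tm.Diseq (applyArgs (Tm.var x σ) p.left) (applyArgs (Tm.var x σ) p.right) ∈ A →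
      ∃ d ∈ p.diseqs, insert d A ∈ Γ
  con : ∀ A ∈ Γ, ∀ {α : ℕ} (s t u v : Tm (Ty.sort α)), Tm.Eqn s t ∈ A → Tm.Diseq u v ∈ A →
      insert (Tm.Diseq s u) (insert (Tm.Diseq t u) A) ∈ Γ ∨
      insert (Tm.Diseq s v) (insert (Tm.Diseq t v) A) ∈ Γ

/-- A complete abstract consistency class. -/
def CompleteACC (Ω : NormOp) (Γ : Set (Set (Tm Ty.o))) : Prop :=
  ∀ A ∈ Γ, ∀ s : Tm Ty.o, Ω.nf s = s → insert s A ∈ Γ ∨ insert (Tm.Not s) A ∈ Γ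

/-- Free occurrence of the name `(x, μ)` in a term. -/
def FreeIn (x : ℕ) (μ : Ty) : ∀ {σ : Ty}, Tm σ → Prop
  | _, Tm.var n σ => x = n ∧ μ = σ
  | _, Tm.app s t => FreeIn x μ s ∨ FreeIn x μ t
  | _, Tm.lam n σ s => ¬(x = n ∧ μ = σ) ∧ FreeIn x μ s
  | _, _ => False

/-- A closed branch: contains `x` and `¬x` for a variable `x : o`, or `x ≠ x` at a sort. -/
def ClosedB (A : Set (Tm Ty.o)) : Prop :=
  (∃ x : ℕ, Tm.var x Ty.o ∈ A ∧ Tm.Not (Tm.var x Ty.o) ∈ A) ∨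
  (∃ (α : ℕ) (x : ℕ), Tm.Diseq (Tm.var x (Ty.sort α)) (Tm.var x (Ty.sort α)) ∈ A)

/-- Refutability in the cut-free tableau calculus `T` for STT, with the restrictions that
rules are applied only to non-closed branches and functional extensionality is applied only
once per disequation. -/
inductive Refutable (Ω : NormOp) : Set (Tm Ty.o) → Prop
  | closed : ∀ {A : Set (Tm Ty.o)}, ClosedB A → Refutable Ω A
  | dn : ∀ {A : Set (Tm Ty.o)} {s : Tm Ty.o}, ¬ClosedB A → Tm.Not (Tm.Not s) ∈ A →
      Refutable Ω (insert s A) → Refutable Ω A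
  | bq : ∀ {A : Set (Tm Ty.o)} (s t : Tm Ty.o), ¬ClosedB A → Tm.Eqn s t ∈ A →
      Refutable Ω (insert s (insert t A)) →
      Refutable Ω (insert (Tm.Not s) (insert (Tm.Not t) A)) → Refutable Ω A
  | be : ∀ {A : Set (Tm Ty.o)} (s t : Tm Ty.o), ¬ClosedB A → Tm.Diseq s t ∈ A →
      Refutable Ω (insert s (insert (Tm.Not t) A)) →
      Refutable Ω (insert (Tm.Not s) (insert t A)) → Refutable Ω A
  | fq : ∀ {A : Set (Tm Ty.o)} {σ τ : Ty} (s t : Tm (Ty.arr σ τ)) (u : Tm σ), ¬ClosedB A →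
      Tm.Eqn s t ∈ A → Ω.nf u = u →
      Refutable Ω (insert (Tm.Eqn (Ω.nf (Tm.app s u)) (Ω.nf (Tm.app t u))) A) → Refutable Ω A
  | fe : ∀ {A : Set (Tm Ty.o)} {σ τ : Ty} (s t : Tm (Ty.arr σ τ)) (x : ℕ), ¬ClosedB A →
      Tm.Diseq s t ∈ A → (∀ u ∈ A, ¬ FreeIn x σ u) →
      (¬∃ y : ℕ, Tm.Diseq (Ω.nf (Tm.app s (Tm.var y σ))) (Ω.nf (Tm.app t (Tm.var y σ))) ∈ A) →
      Refutable Ω (insert (Tm.Diseq (Ω.nf (Tm.app s (Tm.var x σ))) (Ω.nf (Tm.app t (Tm.var x σ)))) A) →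
      Refutable Ω A
  | mat : ∀ {A : Set (Tm Ty.o)} {σ : Ty} (x : ℕ) (p : Args2 σ Ty.o), ¬ClosedB A →
      applyArgs (Tm.var x σ) p.left ∈ A → Tm.Not (applyArgs (Tm.var x σ) p.right) ∈ A →
      (∀ d ∈ p.diseqs, Refutable Ω (insert d A)) → Refutable Ω A
  | dec : ∀ {A : Set (Tm Ty.o)} {σ : Ty} {α : ℕ} (x : ℕ) (p : Args2 σ (Ty.sort α)), ¬ClosedB A →
      Tm.Diseq (applyArgs (Tm.var x σ) p.left) (applyArgs (Tm.var x σ) p.right) ∈ A →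
      (∀ d ∈ p.diseqs, Refutable Ω (insert d A)) → Refutable Ω A
  | con : ∀ {A : Set (Tm Ty.o)} {α : ℕ} (s t u v : Tm (Ty.sort α)), ¬ClosedB A →
      Tm.Eqn s t ∈ A → Tm.Diseq u v ∈ A →
      Refutable Ω (insert (Tm.Diseq s u) (insert (Tm.Diseq t u) A)) →
      Refutable Ω (insert (Tm.Diseq s v) (insert (Tm.Diseq t v) A)) → Refutable Ω A

/-!
Compactness comes from an ultraproduct. Index by the finite sets `B` of formulas, pick a model
of `B ∩ A` for each, and take the ultraproduct along an ultrafilter containing every set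
`{B | s ∈ B}`. Łoś' theorem holds for the evaluation relation because each factor evaluates every
term under every assignment: a term has finitely many free names, and abstracting over them
reaches arbitrary values from the given assignment.

Countability is a downward Löwenheim–Skolem argument. In a model `N`, close the values of the
variables under evaluation of terms in finite environments and under choosing an argument that
separates two distinct functions. Each step adds countably many values, so the closure is
countable; it is a sub-interpretation of `N` in which every term has its value in `N`, hence it
satisfies what `N` satisfies.
-/

section FinitaryClosure

variable {X : Type*} (ops : List X → Set X)

def finitaryClosureStage : ℕ → Set X
  | 0 => ∅
  | k + 1 => finitaryClosureStage k ∪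
      ⋃ l ∈ {l : List X | ∀ y ∈ l, y ∈ finitaryClosureStage k}, ops l

def finitaryClosure : Set X := ⋃ k, finitaryClosureStage ops k

theorem monotone_finitaryClosureStage : Monotone (finitaryClosureStage ops) :=
  monotone_nat_of_le_succ fun _ => Set.subset_union_left

theorem ops_subset_finitaryClosure {l : List X} (hl : ∀ y ∈ l, y ∈ finitaryClosure ops) :
    ops l ⊆ finitaryClosure ops := by
  obtain ⟨k, hk⟩ : ∃ k, ∀ y ∈ l, y ∈ finitaryClosureStage ops k := by
    induction l with
    | nil => exact ⟨0, by simp⟩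
    | cons y l ih =>
        obtain ⟨k₁, hk₁⟩ := Set.mem_iUnion.1 (hl y List.mem_cons_self)
        obtain ⟨k₂, hk₂⟩ := ih fun z hz => hl z (List.mem_cons_of_mem y hz)
        refine ⟨max k₁ k₂, List.forall_mem_cons.2 ⟨?_, fun z hz => ?_⟩⟩
        · exact monotone_finitaryClosureStage ops (le_max_left k₁ k₂) hk₁
        · exact monotone_finitaryClosureStage ops (le_max_right k₁ k₂) (hk₂ z hz)
  intro x hx
  exact Set.mem_iUnion.2 ⟨k + 1, Or.inr (Set.mem_biUnion hk hx)⟩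

theorem countable_setOf_list_forall_mem {T : Set X} (hT : T.Countable) :
    {l : List X | ∀ y ∈ l, y ∈ T}.Countable := by
  have := hT.to_subtype
  refine (Set.countable_range (List.map ((↑) : T → X))).mono fun l hl => ?_
  exact ⟨l.attach.map fun y => ⟨y.1, hl y.1 y.2⟩, by simp⟩

theorem countable_finitaryClosure (hops : ∀ l, (ops l).Countable) :
    (finitaryClosure ops).Countable := by
  refine Set.countable_iUnion fun k => ?_
  induction k with
  | zero => exact Set.countable_empty
  | succ k ih => exact ih.union ((countable_setOf_list_forall_mem ih).biUnion fun l _ => hops l)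

end FinitaryClosure

def Ty.code : Ty → ℕ
  | Ty.base n => Nat.pair 0 n
  | Ty.arr σ τ => Nat.pair 1 (Nat.pair σ.code τ.code)

theorem Ty.code_injective : Function.Injective Ty.code := by
  intro σ τ h
  induction σ generalizing τ with
  | base n => cases τ <;> simp_all [Ty.code, Nat.pair_eq_pair]
  | arr σ₁ σ₂ ih₁ ih₂ =>
      cases τ with
      | base m => simp [Ty.code, Nat.pair_eq_pair] at h
      | arr τ₁ τ₂ =>
          simp only [Ty.code, Nat.pair_eq_pair, true_and] at h
          rw [ih₁ h.1, ih₂ h.2]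

instance : Countable Ty := Ty.code_injective.countable

def Tm.code : ∀ {σ : Ty}, Tm σ → ℕ
  | _, Tm.var n σ => Nat.pair 0 (Nat.pair n σ.code)
  | _, Tm.neg => Nat.pair 1 0
  | _, Tm.eq σ => Nat.pair 2 σ.code
  | _, Tm.app s t => Nat.pair 3 (Nat.pair s.code t.code)
  | _, Tm.lam n σ s => Nat.pair 4 (Nat.pair n (Nat.pair σ.code s.code))

theorem Tm.sigma_eq_of_code_eq {σ τ : Ty} (s : Tm σ) (t : Tm τ) (h : s.code = t.code) :
    (⟨σ, s⟩ : Σ σ, Tm σ) = ⟨τ, t⟩ := by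
  induction s generalizing τ with
  | var n σ =>
      cases t <;> simp only [Tm.code, Nat.pair_eq_pair] at h <;> try omega
      obtain ⟨-, rfl, h⟩ := h
      rw [Ty.code_injective h]
  | neg => cases t <;> simp only [Tm.code, Nat.pair_eq_pair] at h <;> first | omega | rfl
  | eq σ =>
      cases t <;> simp only [Tm.code, Nat.pair_eq_pair] at h <;> try omega
      rw [Ty.code_injective h.2]
  | app s₁ s₂ ih₁ ih₂ =>
      cases t <;> simp only [Tm.code, Nat.pair_eq_pair] at h <;> try omega
      have h₁ := ih₁ _ h.2.1
      have h₂ := ih₂ _ h.2.2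
      simp only [Sigma.mk.injEq, Ty.arr.injEq] at h₁ h₂
      obtain ⟨⟨rfl, rfl⟩, h₁⟩ := h₁
      obtain ⟨-, h₂⟩ := h₂
      cases h₁; cases h₂; rfl
  | lam n σ s ih =>
      cases t <;> simp only [Tm.code, Nat.pair_eq_pair] at h <;> try omega
      obtain ⟨-, rfl, hσ, hs⟩ := h
      obtain rfl := Ty.code_injective hσ
      cases ih _ hs
      rfl

instance : Countable (Σ σ, Tm σ) :=
  Function.Injective.countable (f := fun s => s.2.code) fun s t h =>
    Tm.sigma_eq_of_code_eq s.2 t.2 h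

theorem updD_same (M : Struc) (J : ℕ → ∀ σ, M.D σ) (n : ℕ) (σ : Ty) (a : M.D σ) :
    updD M J n σ a n σ = a := by
  simp [updD]

theorem updD_of_ne (M : Struc) (J : ℕ → ∀ σ, M.D σ) {n m : ℕ} {σ τ : Ty} (a : M.D σ)
    (h : ¬(m = n ∧ τ = σ)) : updD M J n σ a m τ = J m τ := by
  simp only [updD, dif_neg h]

theorem updD_eq_of (M : Struc) {J K : ℕ → ∀ σ, M.D σ} {n : ℕ} {σ : Ty} {a : M.D σ}
    (hsame : K n σ = a) (hne : ∀ m τ, ¬(m = n ∧ τ = σ) → K m τ = J m τ) :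
    updD M J n σ a = K := by
  funext m τ
  by_cases hc : m = n ∧ τ = σ
  · obtain ⟨rfl, rfl⟩ := hc
    rw [updD_same, hsame]
  · rw [updD_of_ne M J a hc, hne m τ hc]

def freeNames : ∀ {σ : Ty}, Tm σ → List (ℕ × Ty)
  | _, Tm.var n σ => [(n, σ)]
  | _, Tm.neg => []
  | _, Tm.eq _ => []
  | _, Tm.app s t => freeNames s ++ freeNames t
  | _, Tm.lam n σ s => (freeNames s).filter (· ≠ (n, σ))

theorem mem_freeNames_of_freeIn {σ : Ty} (s : Tm σ) {x : ℕ} {μ : Ty} (h : FreeIn x μ s) :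
    (x, μ) ∈ freeNames s := by
  induction s with
  | var n σ => obtain ⟨rfl, rfl⟩ := h; simp [freeNames]
  | neg => exact h.elim
  | eq _ => exact h.elim
  | app s t ihs iht => exact List.mem_append.2 (h.imp ihs iht)
  | lam n σ s ih =>
      refine List.mem_filter.2 ⟨ih h.2, ?_⟩
      simp only [ne_eq, decide_eq_true_eq, Prod.mk.injEq]
      exact h.1

namespace Eval

variable {M : Struc}

theorem unique {J : ℕ → ∀ σ, M.D σ} {σ : Ty} {s : Tm σ} {a b : M.D σ}
    (ha : Eval M J σ s a) (hb : Eval M J σ s b) : a = b := by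
  induction ha with
  | var => cases hb; rfl
  | neg => cases hb; rfl
  | eq => cases hb; rfl
  | app _ _ ih₁ ih₂ => cases hb with | app hf ht => rw [ih₁ hf, ih₂ ht]
  | lam n σ s f _ ih => cases hb with | lam _ _ _ _ hg => exact M.ext _ _ fun a => ih a (hg a)

theorem lam_inv {J : ℕ → ∀ σ, M.D σ} {n : ℕ} {σ τ : Ty} {s : Tm τ} {f : M.D (Ty.arr σ τ)}
    (h : Eval M J (Ty.arr σ τ) (Tm.lam n σ s) f) (a : M.D σ) :
    Eval M (updD M J n σ a) τ s (M.ap f a) := by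
  cases h with | lam _ _ _ _ hf => exact hf a

theorem of_eqOn_freeIn {J K : ℕ → ∀ σ, M.D σ} {σ : Ty} {s : Tm σ} {a : M.D σ}
    (h : Eval M J σ s a) (hJK : ∀ x μ, FreeIn x μ s → J x μ = K x μ) : Eval M K σ s a := by
  induction h generalizing K with
  | var J n σ => rw [hJK n σ ⟨rfl, rfl⟩]; exact Eval.var K n σ
  | neg => exact Eval.neg K
  | eq _ σ => exact Eval.eq K σ
  | app _ _ ih₁ ih₂ =>
      exact Eval.app (ih₁ fun x μ hx => hJK x μ (Or.inl hx)) (ih₂ fun x μ hx => hJK x μ (Or.inr hx))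
  | lam n σ s f _ ih =>
      refine Eval.lam n σ s f fun a => ih a fun x μ hx => ?_
      by_cases hc : x = n ∧ μ = σ
      · obtain ⟨rfl, rfl⟩ := hc
        rw [updD_same, updD_same]
      · rw [updD_of_ne _ _ _ hc, updD_of_ne _ _ _ hc]
        exact hJK x μ ⟨hc, hx⟩

end Eval

abbrev Env (M : Struc) : Type := List (ℕ × Σ τ : Ty, M.D τ)

def Env.assign (M : Struc) : Env M → ℕ → ∀ σ, M.D σ
  | [] => M.I
  | (x, ⟨τ, a⟩) :: L => updD M (Env.assign M L) x τ a

def Env.restrict (M : Struc) (J : ℕ → ∀ σ, M.D σ) (l : List (ℕ × Ty)) : Env M :=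
  l.map fun p => (p.1, ⟨p.2, J p.1 p.2⟩)

theorem Env.assign_restrict (M : Struc) (J : ℕ → ∀ σ, M.D σ) {l : List (ℕ × Ty)} {x : ℕ}
    {μ : Ty} (h : (x, μ) ∈ l) : Env.assign M (Env.restrict M J l) x μ = J x μ := by
  induction l with
  | nil => exact absurd h List.not_mem_nil
  | cons p l ih =>
      obtain ⟨y, ν⟩ := p
      by_cases hc : x = y ∧ μ = ν
      · obtain ⟨rfl, rfl⟩ := hc
        exact updD_same ..
      · refine (updD_of_ne _ _ _ hc).trans (ih ?_)
        exact (List.mem_cons.1 h).resolve_left fun he => hc (Prod.ext_iff.1 he)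

namespace Interp

variable (N : Interp)

-- Evaluating `λx.s` under an assignment yields the values of `s` under all its `x`-updates.
theorem exists_eval_env (L : Env N.toStruc) {σ : Ty} (s : Tm σ) :
    ∃ a, Eval N.toStruc (Env.assign N.toStruc L) σ s a := by
  induction L generalizing σ with
  | nil => exact N.total σ s
  | cons p L ih =>
      obtain ⟨x, τ, v⟩ := p
      obtain ⟨f, hf⟩ := ih (Tm.lam x τ s)
      exact ⟨N.ap f v, hf.lam_inv v⟩

theorem exists_eval (J : ℕ → ∀ σ, N.D σ) {σ : Ty} (s : Tm σ) : ∃ a, Eval N.toStruc J σ s a := by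
  obtain ⟨a, ha⟩ := N.exists_eval_env (Env.restrict N.toStruc J (freeNames s)) s
  exact ⟨a, ha.of_eqOn_freeIn fun x μ hx =>
    Env.assign_restrict N.toStruc J (mem_freeNames_of_freeIn s hx)⟩

noncomputable def val (J : ℕ → ∀ σ, N.D σ) {σ : Ty} (s : Tm σ) : N.D σ :=
  (N.exists_eval J s).choose

theorem eval_val (J : ℕ → ∀ σ, N.D σ) {σ : Ty} (s : Tm σ) : Eval N.toStruc J σ s (N.val J s) :=
  (N.exists_eval J s).choose_spec

variable {N} in
theorem val_eq {J : ℕ → ∀ σ, N.D σ} {σ : Ty} {s : Tm σ} {a : N.D σ}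
    (h : Eval N.toStruc J σ s a) : N.val J s = a :=
  (N.eval_val J s).unique h

end Interp

noncomputable def Struc.sep (M : Struc) {σ τ : Ty} (f g : M.D (Ty.arr σ τ)) : M.D σ :=
  @Classical.epsilon _ (M.ne σ) fun a => M.ap f a ≠ M.ap g a

theorem Struc.ap_sep_ne (M : Struc) {σ τ : Ty} {f g : M.D (Ty.arr σ τ)} (hfg : f ≠ g) :
    M.ap f (M.sep f g) ≠ M.ap g (M.sep f g) := by
  have : ∃ a, M.ap f a ≠ M.ap g a := by
    by_contra! h
    exact hfg (M.ext f g h)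
  exact @Classical.epsilon_spec _ (fun a => M.ap f a ≠ M.ap g a) this

namespace Interp

variable (N : Interp)

/-- Closure under evaluation in finite environments makes the hull closed under application and
abstraction; the separating arguments keep it extensional. -/
def hullOps (l : List (Σ σ, N.D σ)) : Set (Σ σ, N.D σ) :=
  Set.range (fun p : (Σ σ, Tm σ) × List ℕ =>
      ⟨p.1.1, N.val (Env.assign N.toStruc (p.2.zip l)) p.1.2⟩) ∪
    ⋃ (σ : Ty) (τ : Ty), Set.image2 (fun f g => ⟨σ, N.sep f g⟩)
      (Sigma.mk (Ty.arr σ τ) ⁻¹' {x | x ∈ l}) (Sigma.mk (Ty.arr σ τ) ⁻¹' {x | x ∈ l})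

def hull : Set (Σ σ, N.D σ) := finitaryClosure N.hullOps

theorem countable_hull : N.hull.Countable := by
  refine countable_finitaryClosure _ fun l => (Set.countable_range _).union ?_
  have hfin (σ : Ty) : (Sigma.mk σ ⁻¹' {x | x ∈ l}).Countable :=
    (l.finite_toSet.preimage sigma_mk_injective.injOn).countable
  exact Set.countable_iUnion fun σ => Set.countable_iUnion fun τ => (hfin _).image2 (hfin _) _

variable {N}

theorem mem_hull_of_env {L : Env N.toStruc} (hL : ∀ p ∈ L, p.2 ∈ N.hull) {σ : Ty} (s : Tm σ) :
    ⟨σ, N.val (Env.assign N.toStruc L) s⟩ ∈ N.hull := by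
  have hl : ∀ y ∈ L.map Prod.snd, y ∈ N.hull := by
    simp only [List.mem_map]
    rintro _ ⟨p, hp, rfl⟩
    exact hL p hp
  refine ops_subset_finitaryClosure _ hl (Or.inl ⟨(⟨σ, s⟩, L.map Prod.fst), ?_⟩)
  dsimp only
  rw [← List.zip_of_prod rfl rfl]

theorem mem_hull_of_eval {J : ℕ → ∀ σ, N.D σ} (hJ : ∀ x μ, ⟨μ, J x μ⟩ ∈ N.hull) {σ : Ty}
    {s : Tm σ} {a : N.D σ} (h : Eval N.toStruc J σ s a) : ⟨σ, a⟩ ∈ N.hull := by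
  have hL : ∀ p ∈ Env.restrict N.toStruc J (freeNames s), p.2 ∈ N.hull := by
    simp only [Env.restrict, List.mem_map]
    rintro _ ⟨q, -, rfl⟩
    exact hJ q.1 q.2
  convert mem_hull_of_env hL s
  refine (val_eq (h.of_eqOn_freeIn fun x μ hx => ?_)).symm
  exact (Env.assign_restrict N.toStruc J (mem_freeNames_of_freeIn s hx)).symm

theorem I_mem_hull (n : ℕ) (σ : Ty) : ⟨σ, N.I n σ⟩ ∈ N.hull := by
  have h := mem_hull_of_env (L := ([] : Env N.toStruc)) (by simp) (Tm.var n σ)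
  rwa [val_eq (Eval.var _ n σ)] at h

theorem mem_hull_of_eval_I {σ : Ty} {s : Tm σ} {a : N.D σ} (h : Eval N.toStruc N.I σ s a) :
    ⟨σ, a⟩ ∈ N.hull :=
  mem_hull_of_eval I_mem_hull h

theorem ap_mem_hull {σ τ : Ty} {f : N.D (Ty.arr σ τ)} {a : N.D σ} (hf : ⟨_, f⟩ ∈ N.hull)
    (ha : ⟨σ, a⟩ ∈ N.hull) : ⟨τ, N.ap f a⟩ ∈ N.hull := by
  let L : Env N.toStruc := [(0, ⟨_, f⟩), (1, ⟨σ, a⟩)]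
  have hL : ∀ p ∈ L, p.2 ∈ N.hull := by simp [L, hf, ha]
  have h₀ : Env.assign N.toStruc L 0 (Ty.arr σ τ) = f := updD_same ..
  have h₁ : Env.assign N.toStruc L 1 σ = a := (updD_of_ne _ _ _ (by simp)).trans (updD_same ..)
  have h := Eval.app (Eval.var (Env.assign N.toStruc L) 0 (Ty.arr σ τ)) (Eval.var _ 1 σ)
  rw [h₀, h₁] at h
  simpa only [val_eq h] using mem_hull_of_env hL (Tm.app (Tm.var 0 (Ty.arr σ τ)) (Tm.var 1 σ))

theorem sep_mem_hull {σ τ : Ty} {f g : N.D (Ty.arr σ τ)} (hf : ⟨_, f⟩ ∈ N.hull)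
    (hg : ⟨_, g⟩ ∈ N.hull) : ⟨σ, N.sep f g⟩ ∈ N.hull := by
  have hl : ∀ y ∈ [⟨_, f⟩, ⟨_, g⟩], y ∈ N.hull := by simp [hf, hg]
  refine ops_subset_finitaryClosure _ hl (Or.inr ?_)
  exact Set.mem_iUnion₂.2 ⟨σ, τ, f, by simp, g, by simp, rfl⟩

theorem bool_mem_hull (b : N.D Ty.o) : ⟨Ty.o, b⟩ ∈ N.hull := by
  have htrue : ⟨Ty.o, N.bo.symm true⟩ ∈ N.hull := by
    have h := Eval.app (Eval.app (Eval.eq N.I Ty.o) (Eval.var N.I 0 Ty.o)) (Eval.var N.I 0 Ty.o)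
    rw [(N.heq _ _).2 rfl] at h
    exact mem_hull_of_eval_I h
  have hfalse : ⟨Ty.o, N.bo.symm false⟩ ∈ N.hull := by
    simpa [N.hneg] using ap_mem_hull (mem_hull_of_eval_I (Eval.neg N.I)) htrue
  rw [← N.bo.symm_apply_apply b]
  cases N.bo b
  exacts [hfalse, htrue]

variable (N)

noncomputable def hullStruc : Struc where
  D σ := {a : N.D σ // ⟨σ, a⟩ ∈ N.hull}
  ap f a := ⟨N.ap f.1 a.1, ap_mem_hull f.2 a.2⟩
  ext f g h := by
    by_contra hfg
    exact N.ap_sep_ne (Subtype.coe_ne_coe.2 hfg)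
      (congrArg Subtype.val (h ⟨_, sep_mem_hull f.2 g.2⟩))
  ne σ := ⟨⟨N.I 0 σ, I_mem_hull 0 σ⟩⟩
  I n σ := ⟨N.I n σ, I_mem_hull n σ⟩
  bo := (Equiv.subtypeUnivEquiv bool_mem_hull).trans N.bo
  negv := ⟨N.negv, mem_hull_of_eval_I (Eval.neg N.I)⟩
  eqv σ := ⟨N.eqv σ, mem_hull_of_eval_I (Eval.eq N.I σ)⟩
  hneg b := by exact Subtype.ext (N.hneg b.1)
  heq a b := by exact Subtype.ext_iff.trans ((N.heq a.1 b.1).trans Subtype.ext_iff.symm)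

instance countable_hullStruc_D (σ : Ty) : Countable (N.hullStruc.D σ) := by
  have := N.countable_hull.to_subtype
  refine Function.Injective.countable (f := fun a : N.hullStruc.D σ => (⟨⟨σ, a.1⟩, a.2⟩ : N.hull))
    fun a b h => ?_
  exact Subtype.ext (eq_of_heq (Sigma.mk.inj_iff.1 (congrArg Subtype.val h)).2)

theorem exists_eval_hullStruc (J : ℕ → ∀ σ, N.hullStruc.D σ) {σ : Ty} (s : Tm σ) :
    ∃ a, Eval N.hullStruc J σ s a ∧ Eval N.toStruc (fun m τ => (J m τ).1) σ s a.1 := by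
  induction s generalizing J with
  | var n σ => exact ⟨J n σ, Eval.var J n σ, Eval.var _ n σ⟩
  | neg => exact ⟨N.hullStruc.negv, Eval.neg J, Eval.neg _⟩
  | eq σ => exact ⟨N.hullStruc.eqv σ, Eval.eq J σ, Eval.eq _ σ⟩
  | app s t ihs iht =>
      obtain ⟨f, hf, hf'⟩ := ihs J
      obtain ⟨a, ha, ha'⟩ := iht J
      exact ⟨N.hullStruc.ap f a, Eval.app hf ha, Eval.app hf' ha'⟩
  | lam n σ s ih =>
      have hf := N.eval_val (fun m τ => (J m τ).1) (Tm.lam n σ s)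
      let f : N.hullStruc.D _ := ⟨_, mem_hull_of_eval (fun m τ => (J m τ).2) hf⟩
      refine ⟨f, Eval.lam n σ s f fun a => ?_, hf⟩
      obtain ⟨b, hb, hb'⟩ := ih (updD N.hullStruc J n σ a)
      have hupd : (fun m τ => (updD N.hullStruc J n σ a m τ).1)
          = updD N.toStruc (fun m τ => (J m τ).1) n σ a.1 :=
        (updD_eq_of _ (congrArg Subtype.val (updD_same ..))
          fun m τ hc => congrArg Subtype.val (updD_of_ne _ _ _ hc)).symm
      rw [hupd] at hb'
      have : b = N.hullStruc.ap f a := Subtype.ext (hb'.unique (hf.lam_inv a.1))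
      rwa [← this]

noncomputable def hullInterp : Interp where
  toStruc := N.hullStruc
  total _ s := (N.exists_eval_hullStruc N.hullStruc.I s).imp fun _ h => h.1

variable {N} in
theorem satisfies_hullInterp {A : Set (Tm Ty.o)} (hA : Satisfies N A) :
    Satisfies N.hullInterp A := by
  intro s hs
  obtain ⟨a, ha, ha'⟩ := N.exists_eval_hullStruc N.hullStruc.I s
  have : a = N.hullStruc.bo.symm true := Subtype.ext (ha'.unique (hA s hs))
  rw [this] at ha
  exact ha

section Ultraproduct

variable {ι : Type} (U : Ultrafilter ι) (M : ι → Interp)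

abbrev UltraD (σ : Ty) : Type := (U : Filter ι).Product fun i => (M i).D σ

variable {U M}

def ultraMk {σ : Ty} (x : ∀ i, (M i).D σ) : UltraD U M σ := Quotient.mk'' x

theorem ultraMk_eq_iff {σ : Ty} {x y : ∀ i, (M i).D σ} :
    (ultraMk x : UltraD U M σ) = ultraMk y ↔ ∀ᶠ i in U, x i = y i :=
  Quotient.eq''

theorem ultraMk_congr {σ : Ty} {x y : ∀ i, (M i).D σ} (h : ∀ i, x i = y i) :
    (ultraMk x : UltraD U M σ) = ultraMk y :=
  congrArg ultraMk (funext h)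

@[elab_as_elim]
theorem UltraD.ind {σ : Ty} {p : UltraD U M σ → Prop} (h : ∀ x, p (ultraMk x)) (a : UltraD U M σ) :
    p a :=
  Quotient.inductionOn' a h

def ultraAp {σ τ : Ty} (f : UltraD U M (Ty.arr σ τ)) (a : UltraD U M σ) : UltraD U M τ :=
  Quotient.map₂ (fun f a i => (M i).ap (f i) (a i))
    (fun _ _ hf _ _ ha => (hf.and ha).mono fun i h => congrArg₂ (M i).ap h.1 h.2) f a

theorem ultraAp_mk {σ τ : Ty} (f : ∀ i, (M i).D (Ty.arr σ τ)) (a : ∀ i, (M i).D σ) :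
    ultraAp (ultraMk f : UltraD U M _) (ultraMk a) = ultraMk fun i => (M i).ap (f i) (a i) :=
  rfl

theorem ultraAp_ext {σ τ : Ty} (f g : UltraD U M (Ty.arr σ τ))
    (h : ∀ a, ultraAp f a = ultraAp g a) : f = g := by
  induction f using UltraD.ind with | h x =>
  induction g using UltraD.ind with | h y =>
  by_contra hxy
  have hne : ∀ᶠ i in U, x i ≠ y i := U.eventually_not.2 (mt ultraMk_eq_iff.2 hxy)
  have hap := ultraMk_eq_iff.1 (h (ultraMk fun i => (M i).sep (x i) (y i)))
  obtain ⟨i, hi, hi'⟩ := (hne.and hap).exists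
  exact (M i).ap_sep_ne hi hi'

def ultraOfBool (b : Bool) : UltraD U M Ty.o := ultraMk fun i => (M i).bo.symm b

theorem ultraOfBool_bijective : Function.Bijective (ultraOfBool : Bool → UltraD U M Ty.o) := by
  refine ⟨fun b c h => ?_, fun a => ?_⟩
  · obtain ⟨i, hi⟩ := (ultraMk_eq_iff.1 h).exists
    exact (M i).bo.symm.injective hi
  · induction a using UltraD.ind with | h x =>
    rcases U.em fun i => (M i).bo (x i) = true with h | h
    · exact ⟨true, ultraMk_eq_iff.2 (h.mono fun i hi => (Equiv.symm_apply_eq _).2 hi.symm)⟩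
    · exact ⟨false, ultraMk_eq_iff.2
        (h.mono fun i hi => (Equiv.symm_apply_eq _).2 (Bool.eq_false_iff.2 hi).symm)⟩

variable (U M)

noncomputable def ultraStruc : Struc where
  D := UltraD U M
  ap := ultraAp
  ext := ultraAp_ext
  ne σ := ⟨ultraMk fun i => Classical.choice ((M i).ne σ)⟩
  I n σ := ultraMk fun i => (M i).I n σ
  bo := (Equiv.ofBijective _ ultraOfBool_bijective).symm
  negv := ultraMk fun i => (M i).negv
  eqv σ := ultraMk fun i => (M i).eqv σ
  hneg b := by
    obtain ⟨c, rfl⟩ := ultraOfBool_bijective.2 b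
    simp only [Equiv.symm_symm, Equiv.ofBijective_apply, Equiv.ofBijective_symm_apply_apply]
    exact ultraMk_congr fun i => ((M i).hneg _).trans (by rw [Equiv.apply_symm_apply])
  heq a b := by
    induction a using UltraD.ind with | h x =>
    induction b using UltraD.ind with | h y =>
    simp only [Equiv.symm_symm, Equiv.ofBijective_apply, ultraOfBool, ultraAp_mk, ultraMk_eq_iff]
    exact Filter.eventually_congr (.of_forall fun i => (M i).heq (x i) (y i))

theorem eval_ultraStruc (J : ∀ i, ℕ → ∀ σ, (M i).D σ) {σ : Ty} (s : Tm σ) :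
    Eval (ultraStruc U M) (fun m τ => ultraMk fun i => J i m τ) σ s
      (ultraMk fun i => (M i).val (J i) s) := by
  induction s generalizing J with
  | var n σ =>
      rw [ultraMk_congr fun i => val_eq (Eval.var (J i) n σ)]
      exact Eval.var _ n σ
  | neg =>
      rw [ultraMk_congr fun i => val_eq (Eval.neg (J i))]
      exact Eval.neg _
  | eq σ =>
      rw [ultraMk_congr fun i => val_eq (Eval.eq (J i) σ)]
      exact Eval.eq _ σ
  | app s t ihs iht =>
      rw [ultraMk_congr fun i =>
        val_eq (Eval.app ((M i).eval_val (J i) s) ((M i).eval_val (J i) t))]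
      exact Eval.app (ihs J) (iht J)
  | lam n σ s ih =>
      refine Eval.lam n σ s _ fun a => ?_
      induction a using UltraD.ind with | h x =>
      let J' i := updD (M i).toStruc (J i) n σ (x i)
      have hupd : updD (ultraStruc U M) (fun m τ => ultraMk fun i => J i m τ) n σ (ultraMk x)
          = fun m τ => ultraMk fun i => J' i m τ :=
        updD_eq_of _ (ultraMk_congr fun i => updD_same ..)
          fun m τ hc => ultraMk_congr fun i => updD_of_ne _ _ _ hc
      have hval : (ultraStruc U M).ap (ultraMk fun i => (M i).val (J i) (Tm.lam n σ s)) (ultraMk x)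
          = ultraMk fun i => (M i).val (J' i) s :=
        ultraMk_congr fun i => (val_eq (((M i).eval_val (J i) _).lam_inv (x i))).symm
      rw [hupd, hval]
      exact ih J'

noncomputable def ultraproduct : Interp where
  toStruc := ultraStruc U M
  total _ s := ⟨_, eval_ultraStruc U M (fun i => (M i).I) s⟩

variable {U M} in
theorem satisfies_ultraproduct {A : Set (Tm Ty.o)}
    (hA : ∀ s ∈ A, ∀ᶠ i in U, Eval (M i).toStruc (M i).I Ty.o s ((M i).bo.symm true)) :
    Satisfies (ultraproduct U M) A := by
  intro s hs
  have h := eval_ultraStruc U M (fun i => (M i).I) s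
  rwa [ultraMk_eq_iff.2 ((hA s hs).mono fun i hi => val_eq hi)] at h

end Ultraproduct

end Interp

theorem exists_satisfies_of_finite {A : Set (Tm Ty.o)}
    (h : ∀ B ⊆ A, B.Finite → ∃ M : Interp, Satisfies M B) : ∃ M : Interp, Satisfies M A := by
  classical
  choose M hM using fun B : Finset (Tm Ty.o) =>
    h (↑B ∩ A) Set.inter_subset_right (B.finite_toSet.inter_of_left A)
  refine ⟨Interp.ultraproduct (.of Filter.atTop) M, Interp.satisfies_ultraproduct fun s hs => ?_⟩
  filter_upwards [Ultrafilter.of_le _ (Filter.eventually_ge_atTop {s})] with B hB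
  exact hM B s ⟨hB (Finset.mem_singleton_self s), hs⟩

theorem stmt17_general
    (A : Set (Tm Ty.o))
    (h : ∀ B ⊆ A, B.Finite → ∃ M : Interp, Satisfies M B) :
    ∃ M : Interp, Satisfies M A ∧ ∀ σ : Ty, Countable (M.D σ) := by
  obtain ⟨M, hM⟩ := exists_satisfies_of_finite h
  exact ⟨M.hullInterp, Interp.satisfies_hullInterp hM, M.countable_hullStruc_D⟩

/-- Compactness with countable models: if every finite subset of a branch `A`
is satisfiable, then `A` has a model all of whose domains are countable. -/
theorem stmt17 (Ω : NormOp)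
    (hN4 : ∀ (M : Struc) (I : ℕ → ∀ σ, M.D σ), (∀ (σ : Ty) (s : Tm σ), ∃ a, Eval M I σ s a) →
      ∀ (σ : Ty) (s : Tm σ) (a : M.D σ), Eval M I σ s a ↔ Eval M I σ (Ω.nf s) a)
    (A : Set (Tm Ty.o)) (hnorm : ∀ s ∈ A, Ω.nf s = s)
    (h : ∀ B ⊆ A, B.Finite → ∃ M : Interp, Satisfies M B) :
    ∃ M : Interp, Satisfies M A ∧ ∀ σ : Ty, Countable (M.D σ) :=
  stmt17_general A h
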